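/- arXiv:0906.0453 — 6 statements merged into one kernel-verified Lean document; each statement's English description precedes it below -/
import Mathlib

section
/- For a nonempty convex subset U of a separated locally convex space X and a point x in U, x belongs to the quasi-relative interior of U if and only if the normal cone N_U(x) = {x* ∈ X* : ⟨x*, y - x⟩ ≤ 0 for all y ∈ U} is a linear subspace of X*. -/
open Set Pointwise Topology

/-- The conic hull: cone(S) = ⋃_{t ≥ 0} t • S. -/
def coneHull {E : Type*} [AddCommGroup E] [Module ℝ E] (S : Set E) : Set E :=
  {x | ∃ t : ℝ, 0 ≤ t ∧ ∃ s ∈ S, x = t • s}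

/-- The quasi-relative interior. -/
def qri {E : Type*} [AddCommGroup E] [Module ℝ E] [TopologicalSpace E] (U : Set E) : Set E :=
  {x | x ∈ U ∧ ∃ M : Submodule ℝ E, closure (coneHull (U - {x})) = (M : Set E)}

/-- The quasi interior. -/
def qi {E : Type*} [AddCommGroup E] [Module ℝ E] [TopologicalSpace E] (U : Set E) : Set E :=
  {x | x ∈ U ∧ closure (coneHull (U - {x})) = Set.univ}

/-- The algebraic interior (core). -/
def algCore {E : Type*} [AddCommGroup E] [Module ℝ E] (U : Set E) : Set E :=
  {x | x ∈ U ∧ coneHull (U - {x}) = Set.univ}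

/-- The relative algebraic interior (intrinsic core). -/
def icr {E : Type*} [AddCommGroup E] [Module ℝ E] (U : Set E) : Set E :=
  {x | x ∈ U ∧ ∃ M : Submodule ℝ E, coneHull (U - {x}) = (M : Set E)}

/-- The strong quasi-relative interior. -/
def sqri {E : Type*} [AddCommGroup E] [Module ℝ E] [TopologicalSpace E] (U : Set E) : Set E :=
  {x | x ∈ U ∧ ∃ M : Submodule ℝ E, coneHull (U - {x}) = (M : Set E) ∧ IsClosed (M : Set E)}

/-- The normal cone of U at x. -/
def normalCone {E : Type*} [AddCommGroup E] [Module ℝ E] [TopologicalSpace E]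
    (U : Set E) (x : E) : Set (E →L[ℝ] ℝ) :=
  {f | ∀ y ∈ U, f (y - x) ≤ 0}


/-! Let `K = cl cone(U - x)`. The normal cone `N_U(x)` is the polar `{f | f ≤ 0 on K}` of `K`,
and, `K` being a closed convex cone, Farkas' lemma shows that `K` is in turn the polar of `N_U(x)`.
A convex cone is a linear subspace exactly when it is symmetric, and the polar of a symmetric set
is symmetric; so `K` is a subspace iff `N_U(x)` is. -/

theorem PointedCone.exists_submodule_eq_iff_neg_mem {R E : Type*} [Ring R] [LinearOrder R]
    [IsOrderedRing R] [AddCommGroup E] [Module R E] {C : PointedCone R E} {s : Set E}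
    (hC : (C : Set E) = s) : (∃ M : Submodule R E, s = M) ↔ ∀ x ∈ s, -x ∈ s := by
  subst hC
  refine ⟨fun ⟨M, hM⟩ x hx => ?_, fun h => ⟨C.lineal, ?_⟩⟩
  · rw [hM] at hx ⊢
    exact M.neg_mem hx
  · ext x
    simpa using fun hx => h x hx

section

variable {E : Type*} [AddCommGroup E] [Module ℝ E] {S U : Set E} {x : E}

theorem coe_pointedConeHull_of_convex (hS : Convex ℝ S) (h0 : (0 : E) ∈ S) :
    (PointedCone.hull ℝ S : Set E) = coneHull S := by
  ext v
  constructor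
  · intro hv
    have hle : PointedCone.hull ℝ S ≤
        (ConvexCone.hull ℝ S).toPointedCone (ConvexCone.subset_hull h0) :=
      Submodule.span_le.2 ConvexCone.subset_hull
    obtain ⟨r, hr, s, hs, rfl⟩ := (ConvexCone.mem_hull_of_convex hS).1 (hle hv)
    exact ⟨r, hr.le, s, hs, rfl⟩
  · rintro ⟨t, ht, s, hs, rfl⟩
    exact (PointedCone.hull ℝ S).smul_mem ht (PointedCone.subset_hull hs)

variable [TopologicalSpace E]

def normalPointedCone (U : Set E) (x : E) : PointedCone ℝ (E →L[ℝ] ℝ) where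
  carrier := normalCone U x
  zero_mem' _ _ := le_rfl
  add_mem' hf hg y hy := add_nonpos (hf y hy) (hg y hy)
  smul_mem' c _ hf y hy := mul_nonpos_of_nonneg_of_nonpos c.2 (hf y hy)

theorem coe_normalPointedCone :
    (normalPointedCone U x : Set (E →L[ℝ] ℝ)) = normalCone U x :=
  rfl

theorem mem_normalCone_iff_forall_closure_coneHull {f : E →L[ℝ] ℝ} :
    f ∈ normalCone U x ↔ ∀ v ∈ closure (coneHull (U - {x})), f v ≤ 0 := by
  refine ⟨fun hf => closure_minimal ?_ (isClosed_Iic.preimage f.continuous), fun hf y hy =>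
    hf _ (subset_closure ⟨1, zero_le_one, _, sub_mem_sub hy rfl, (one_smul _ _).symm⟩)⟩
  rintro _ ⟨t, ht, _, ⟨y, hy, _, rfl, rfl⟩, rfl⟩
  show f (t • _) ≤ 0
  rw [map_smul, smul_eq_mul]
  exact mul_nonpos_of_nonneg_of_nonpos ht (hf y hy)

variable [IsTopologicalAddGroup E] [ContinuousSMul ℝ E]

theorem coe_topologicalClosure_pointedConeHull (hU : Convex ℝ U) (hx : x ∈ U) :
    ((PointedCone.hull ℝ (U - {x})).topologicalClosure : Set E) =
      closure (coneHull (U - {x})) := by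
  rw [Submodule.topologicalClosure_coe,
    coe_pointedConeHull_of_convex (hU.sub (convex_singleton x)) ⟨x, hx, x, rfl, sub_self x⟩]

theorem mem_closure_coneHull_iff_forall_normalCone [LocallyConvexSpace ℝ E]
    (hU : Convex ℝ U) (hx : x ∈ U) {v : E} :
    v ∈ closure (coneHull (U - {x})) ↔ ∀ f ∈ normalCone U x, f v ≤ 0 := by
  refine ⟨fun hv f hf => mem_normalCone_iff_forall_closure_coneHull.1 hf v hv, fun hN => ?_⟩
  set K : ProperCone ℝ E := Submodule.closure (PointedCone.hull ℝ (U - {x}))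
  have hK : (K : Set E) = closure (coneHull (U - {x})) :=
    coe_topologicalClosure_pointedConeHull hU hx
  by_contra hv
  rw [← hK] at hv
  obtain ⟨g, hgK, hgv⟩ := K.hyperplane_separation_point hv
  have hg : -g ∈ normalCone U x := mem_normalCone_iff_forall_closure_coneHull.2 fun w hw => by
    simpa using hgK w (by rwa [← SetLike.mem_coe, hK])
  linarith [hN _ hg, show (-g) v = -g v from rfl]

end

theorem qri_iff_normalCone_linear_subspace_general
    {X : Type*} [AddCommGroup X] [Module ℝ X] [TopologicalSpace X]
    [IsTopologicalAddGroup X] [ContinuousSMul ℝ X] [LocallyConvexSpace ℝ X]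
    (U : Set X) (hconv : Convex ℝ U) (x : X) (hx : x ∈ U) :
    x ∈ qri U ↔
      ∃ M : Submodule ℝ (X →L[ℝ] ℝ), normalCone U x = (M : Set (X →L[ℝ] ℝ)) := by
  rw [qri, mem_ofPred_eq, and_iff_right hx,
    PointedCone.exists_submodule_eq_iff_neg_mem (coe_topologicalClosure_pointedConeHull hconv hx),
    PointedCone.exists_submodule_eq_iff_neg_mem coe_normalPointedCone]
  constructor
  · intro hK f hf
    rw [mem_normalCone_iff_forall_closure_coneHull] at hf ⊢
    exact fun v hv => by simpa using hf (-v) (hK v hv)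
  · intro hN v hv
    rw [mem_closure_coneHull_iff_forall_normalCone hconv hx] at hv ⊢
    exact fun f hf => by simpa using hv (-f) (hN f hf)

theorem qri_iff_normalCone_linear_subspace
    {X : Type*} [AddCommGroup X] [Module ℝ X] [TopologicalSpace X]
    [IsTopologicalAddGroup X] [ContinuousSMul ℝ X] [LocallyConvexSpace ℝ X] [T2Space X]
    (U : Set X) (hne : U.Nonempty) (hconv : Convex ℝ U) (x : X) (hx : x ∈ U) :
    x ∈ qri U ↔
      ∃ M : Submodule ℝ (X →L[ℝ] ℝ), normalCone U x = (M : Set (X →L[ℝ] ℝ)) :=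
  qri_iff_normalCone_linear_subspace_general U hconv x hx
end

section
/- Let U be a nonempty convex subset of a separated locally convex space X. Then for every t ∈ (0,1], t·qri(U) + (1-t)·U ⊆ qri(U); in particular qri(U) is a convex set. -/
open Set Pointwise Topology

/-!
Let `x ∈ qri U`, so that `M := cl(cone(U - x))` is a (closed) subspace, let `y ∈ U` and
`z = t • x + (1 - t) • y` with `0 < t ≤ 1`. Then `U - z ⊆ M`, since
`u - z = (u - x) - (1 - t) • (y - x)`, while `t • (U - x) ⊆ U - z`, since
`t • (u - x) = (t • u + (1 - t) • y) - z` and `U` is convex. Hence `cl(cone(U - z)) = M` and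
`z ∈ qri U`. Convexity of `qri U` is the case `y ∈ qri U ⊆ U`.
-/

section ConeHull

variable {E : Type*} [AddCommGroup E] [Module ℝ E]

lemma subset_coneHull (S : Set E) : S ⊆ coneHull S :=
  fun s hs => ⟨1, zero_le_one, s, hs, (one_smul ℝ s).symm⟩

lemma coneHull_subset_submodule {S : Set E} {M : Submodule ℝ E} (h : S ⊆ M) :
    coneHull S ⊆ M := by
  rintro _ ⟨r, -, s, hs, rfl⟩
  exact M.smul_mem r (h hs)

lemma coneHull_subset_coneHull_of_smul_subset {S T : Set E} {c : ℝ} (hc : 0 < c)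
    (h : c • S ⊆ T) : coneHull S ⊆ coneHull T := by
  rintro _ ⟨r, hr, s, hs, rfl⟩
  refine ⟨r * c⁻¹, by positivity, c • s, h (smul_mem_smul_set hs), ?_⟩
  rw [smul_smul, mul_assoc, inv_mul_cancel₀ hc.ne', mul_one]

end ConeHull

section QuasiRelativeInterior

variable {X : Type*} [AddCommGroup X] [Module ℝ X] [TopologicalSpace X]

lemma closure_coneHull_sub_convexCombo_eq {U : Set X} (hconv : Convex ℝ U) {t : ℝ}
    (ht : 0 < t) (ht1 : t ≤ 1) {x y : X} (hx : x ∈ qri U) (hy : y ∈ U) :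
    closure (coneHull (U - {t • x + (1 - t) • y})) = closure (coneHull (U - {x})) := by
  obtain ⟨hxU, M, hM⟩ := hx
  have hUx : U - {x} ⊆ M := hM ▸ (subset_coneHull _).trans subset_closure
  apply le_antisymm
  · rw [hM]
    refine closure_minimal (coneHull_subset_submodule ?_) (hM ▸ isClosed_closure)
    rw [sub_singleton]
    rintro _ ⟨u, hu, rfl⟩
    have hux : u - x ∈ M := hUx (sub_mem_sub hu rfl)
    have hyx : y - x ∈ M := hUx (sub_mem_sub hy rfl)
    have hcombo : u - (t • x + (1 - t) • y) = (u - x) - (1 - t) • (y - x) := by module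
    change u - _ ∈ M
    exact hcombo ▸ M.sub_mem hux (M.smul_mem _ hyx)
  · refine closure_mono (coneHull_subset_coneHull_of_smul_subset ht ?_)
    rw [sub_singleton, sub_singleton]
    rintro _ ⟨_, ⟨u, hu, rfl⟩, rfl⟩
    have hmem : t • u + (1 - t) • y ∈ U := hconv hu hy ht.le (by linarith) (by ring)
    have hcombo : t • (u - x) = (t • u + (1 - t) • y) - (t • x + (1 - t) • y) := by module
    exact ⟨_, hmem, hcombo.symm⟩

lemma convexCombo_mem_qri {U : Set X} (hconv : Convex ℝ U) {t : ℝ} (ht : 0 < t) (ht1 : t ≤ 1)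
    {x y : X} (hx : x ∈ qri U) (hy : y ∈ U) : t • x + (1 - t) • y ∈ qri U :=
  ⟨hconv hx.1 hy ht.le (by linarith) (by ring),
    closure_coneHull_sub_convexCombo_eq hconv ht ht1 hx hy ▸ hx.2⟩

end QuasiRelativeInterior

theorem qri_segment_and_convex_general
    {X : Type*} [AddCommGroup X] [Module ℝ X] [TopologicalSpace X]
    (U : Set X) (hconv : Convex ℝ U) :
    (∀ t : ℝ, 0 < t → t ≤ 1 → t • qri U + (1 - t) • U ⊆ qri U) ∧ Convex ℝ (qri U) := by
  refine ⟨?_, convex_iff_forall_pos.2 ?_⟩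
  · rintro t ht ht1 _ ⟨_, ⟨x, hx, rfl⟩, _, ⟨y, hy, rfl⟩, rfl⟩
    exact convexCombo_mem_qri hconv ht ht1 hx hy
  · intro x hx y hy a b ha _ hab
    obtain rfl : b = 1 - a := by linarith
    exact convexCombo_mem_qri hconv ha (by linarith) hx hy.1

theorem qri_segment_and_convex
    {X : Type*} [AddCommGroup X] [Module ℝ X] [TopologicalSpace X]
    [IsTopologicalAddGroup X] [ContinuousSMul ℝ X] [LocallyConvexSpace ℝ X] [T2Space X]
    (U : Set X) (hne : U.Nonempty) (hconv : Convex ℝ U) :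
    (∀ t : ℝ, 0 < t → t ≤ 1 → t • qri U + (1 - t) • U ⊆ qri U) ∧ Convex ℝ (qri U) :=
  qri_segment_and_convex_general U hconv
end

section
/- Let U be a nonempty convex subset of a separated locally convex space X and x ∈ U. If x ∉ qri(U), then there exists a nonzero continuous linear functional x* ∈ X* such that ⟨x*, y⟩ ≤ ⟨x*, x⟩ for all y ∈ U. -/
open Set Pointwise Topology

/- The separating functional comes from Farkas' lemma applied to the closed convex cone
`C = cl(cone(U - x))`. If `x ∉ qri U` then `C` is not a subspace, in particular `C ≠ X`, so some
point lies outside `C`; Hahn–Banach gives a nonzero continuous functional `g ≥ 0` on `C`, and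
`-g` is `≤ 0` on `U - x ⊆ C`. -/

lemma qi_subset_qri {E : Type*} [AddCommGroup E] [Module ℝ E] [TopologicalSpace E]
    (U : Set E) : qi U ⊆ qri U :=
  fun _ ⟨hxU, hdense⟩ ↦ ⟨hxU, ⊤, by rw [hdense, Submodule.top_coe]⟩

section ConeHull

variable {E : Type*} [AddCommGroup E] [Module ℝ E] {S : Set E}

lemma coneHull_eq_hull_of_convex (hS : Convex ℝ S) (h0 : (0 : E) ∈ S) :
    coneHull S = ConvexCone.hull ℝ S := by
  ext z
  rw [SetLike.mem_coe, ConvexCone.mem_hull_of_convex hS]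
  constructor
  · rintro ⟨t, ht, s, hs, rfl⟩
    rcases ht.eq_or_lt with rfl | ht
    · exact ⟨1, one_pos, by simpa using h0⟩
    · exact ⟨t, ht, smul_mem_smul_set hs⟩
  · rintro ⟨r, hr, s, hs, rfl⟩
    exact ⟨r, hr.le, s, hs, rfl⟩

variable [TopologicalSpace E] [ContinuousAdd E] [ContinuousConstSMul ℝ E]

def closedConeHull (S : Set E) (h0 : (0 : E) ∈ S) : ProperCone ℝ E where
  toSubmodule := ((ConvexCone.hull ℝ S).toPointedCone (ConvexCone.subset_hull h0)).closure
  isClosed' := isClosed_closure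

lemma coe_closedConeHull (hS : Convex ℝ S) (h0 : (0 : E) ∈ S) :
    (closedConeHull S h0 : Set E) = closure (coneHull S) := by
  rw [coneHull_eq_hull_of_convex hS h0]
  rfl

lemma subset_closedConeHull (h0 : (0 : E) ∈ S) : S ⊆ closedConeHull S h0 :=
  (ConvexCone.subset_hull).trans subset_closure

end ConeHull

theorem separation_of_not_mem_qri_general
    {X : Type*} [AddCommGroup X] [Module ℝ X] [TopologicalSpace X]
    [IsTopologicalAddGroup X] [ContinuousSMul ℝ X] [LocallyConvexSpace ℝ X]
    (U : Set X) (hconv : Convex ℝ U) (x : X) (hx : x ∈ U)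
    (hxqri : x ∉ qri U) :
    ∃ f : X →L[ℝ] ℝ, f ≠ 0 ∧ ∀ y ∈ U, f y ≤ f x := by
  have h0 : (0 : X) ∈ U - {x} := ⟨x, hx, x, rfl, sub_self x⟩
  set C := closedConeHull (U - {x}) h0
  have hC : (C : Set X) ≠ univ := by
    rw [coe_closedConeHull (hconv.sub (convex_singleton x))]
    exact fun hdense ↦ hxqri (qi_subset_qri U ⟨hx, hdense⟩)
  obtain ⟨w, hw⟩ := (ne_univ_iff_exists_notMem _).1 hC
  obtain ⟨g, hgC, hgw⟩ := C.hyperplane_separation_point hw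
  refine ⟨-g, fun hg ↦ ?_, fun y hy ↦ ?_⟩
  · simp [neg_eq_zero.1 hg] at hgw
  · have hyx := hgC (y - x) (subset_closedConeHull h0 ⟨y, hy, x, rfl, rfl⟩)
    simp only [map_sub, neg_apply] at hyx ⊢
    linarith

theorem separation_of_not_mem_qri
    {X : Type*} [AddCommGroup X] [Module ℝ X] [TopologicalSpace X]
    [IsTopologicalAddGroup X] [ContinuousSMul ℝ X] [LocallyConvexSpace ℝ X] [T2Space X]
    (U : Set X) (hne : U.Nonempty) (hconv : Convex ℝ U) (x : X) (hx : x ∈ U)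
    (hxqri : x ∉ qri U) :
    ∃ f : X →L[ℝ] ℝ, f ≠ 0 ∧ ∀ y ∈ U, f y ≤ f x :=
  separation_of_not_mem_qri_general U hconv x hx hxqri
end

section
/- For 1 ≤ p < ∞, the interior, algebraic interior (core), strong quasi-relative interior, and relative algebraic interior (intrinsic core) of the positive cone ℓ^p_+ in ℓ^p(ℕ) are all empty. -/
open Set Pointwise Topology

/-!
If `cone(ℓ^p_+ - x)` were a subspace, then for every `y ≥ 0` we would have `x - y = t (u - x)` with
`t ≥ 0`, `u ≥ 0`, hence `y ≤ (1 + t) x`: `x` would be an order unit. But `x n → 0` since `p < ∞`,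
so along a subsequence `(k + 1) x (φ k) < 2⁻ᵏ`, and the sequence equal to `2⁻ᵏ` at `φ k` and `0`
elsewhere lies in `ℓ^p_+` without being dominated by any multiple of `x`. The core, the strong
quasi-relative interior and the interior are all contained in the intrinsic core.
-/

open Filter Function

section ConeInteriors

variable {E : Type*} [AddCommGroup E] [Module ℝ E]

theorem neg_mem_coneHull_of_coneHull_eq {S : Set E} {M : Submodule ℝ E}
    (hM : coneHull S = (M : Set E)) {v : E} (hv : v ∈ S) : -v ∈ coneHull S := by
  have hvM : v ∈ M := by
    rw [← SetLike.mem_coe, ← hM]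
    exact ⟨1, zero_le_one, v, hv, (one_smul ℝ v).symm⟩
  rw [hM]
  exact M.neg_mem hvM

theorem algCore_subset_icr (U : Set E) : algCore U ⊆ icr U :=
  fun _ ⟨hxU, hx⟩ => ⟨hxU, ⊤, by rw [hx, Submodule.top_coe]⟩

theorem sqri_subset_icr [TopologicalSpace E] (U : Set E) : sqri U ⊆ icr U :=
  fun _ ⟨hxU, M, hM, _⟩ => ⟨hxU, M, hM⟩

theorem interior_subset_algCore [TopologicalSpace E] [ContinuousAdd E] [ContinuousSMul ℝ E]
    (U : Set E) : interior U ⊆ algCore U := by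
  intro x hx
  refine ⟨interior_subset hx, eq_univ_of_forall fun v => ?_⟩
  have hline : Tendsto (fun s : ℝ => x + s • v) (𝓝 0) (𝓝 x) := by
    simpa using (tendsto_const_nhds (x := x)).add ((tendsto_id (x := 𝓝 (0 : ℝ))).smul_const v)
  have hnear : ∀ᶠ s in 𝓝[>] (0 : ℝ), x + s • v ∈ interior U ∧ 0 < s :=
    (hline.eventually (isOpen_interior.mem_nhds hx)).filter_mono nhdsWithin_le_nhds
      |>.and self_mem_nhdsWithin
  obtain ⟨s, hsU, hs⟩ := hnear.exists
  refine ⟨s⁻¹, inv_nonneg.2 hs.le, x + s • v - x,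
    ⟨x + s • v, interior_subset hsU, x, rfl, rfl⟩, ?_⟩
  rw [add_sub_cancel_left, inv_smul_smul₀ hs.ne']

end ConeInteriors

theorem Memℓp.tendsto_norm_cofinite_zero {α : Type*} {E : α → Type*}
    [∀ i, NormedAddCommGroup (E i)] {p : ENNReal} {f : ∀ i, E i} (hf : Memℓp f p)
    (hp : 0 < p.toReal) : Tendsto (fun i => ‖f i‖) cofinite (𝓝 0) := by
  have h := ((hf.summable hp).tendsto_cofinite_zero).rpow_const (p := p.toReal⁻¹)
    (Or.inr (inv_nonneg.2 hp.le))
  rw [Real.zero_rpow (inv_ne_zero hp.ne')] at h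
  refine h.congr fun i => ?_
  rw [← Real.rpow_mul (norm_nonneg _), mul_inv_cancel₀ hp.ne', Real.rpow_one]

theorem memℓp_extend_pow {ι : Type*} {φ : ℕ → ι} (hφ : Injective φ) {r : ℝ} (hr₀ : 0 ≤ r)
    (hr₁ : r < 1) {p : ENNReal} (hp : 0 < p.toReal) : Memℓp (extend φ (fun k => r ^ k) 0) p := by
  refine memℓp_gen ?_
  have hnorm : (fun i => ‖extend φ (fun k => r ^ k) 0 i‖ ^ p.toReal) =
      extend φ (fun k => (r ^ p.toReal) ^ k) 0 := by
    funext i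
    rw [apply_extend (fun x : ℝ => ‖x‖ ^ p.toReal) φ]
    congr 1
    · funext k
      rw [comp_apply, norm_pow, Real.norm_of_nonneg hr₀, ← Real.rpow_natCast,
        ← Real.rpow_natCast, ← Real.rpow_mul hr₀, ← Real.rpow_mul hr₀, mul_comm]
    · funext i
      simp [Real.zero_rpow hp.ne']
  rw [hnorm, summable_extend_zero hφ]
  exact summable_geometric_of_lt_one (by positivity) (Real.rpow_lt_one hr₀ hr₁ hp)

theorem exists_memℓp_nonneg_forall_exists_mul_lt {a : ℕ → ℝ} (ha : ∀ n, 0 ≤ a n)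
    (h : Tendsto a atTop (𝓝 0)) {p : ENNReal} (hp : 0 < p.toReal) :
    ∃ y : ℕ → ℝ, (∀ n, 0 ≤ y n) ∧ Memℓp y p ∧ ∀ c : ℝ, ∃ n, c * a n < y n := by
  obtain ⟨φ, hφ, hφa⟩ : ∃ φ : ℕ → ℕ, StrictMono φ ∧ ∀ k, (k + 1) * a (φ k) < 2⁻¹ ^ k :=
    extraction_forall_of_eventually fun k => by
      have hk : Tendsto (fun n => ((k : ℝ) + 1) * a n) atTop (𝓝 0) := by
        simpa using h.const_mul ((k : ℝ) + 1)
      exact hk.eventually_lt_const (by positivity : (0 : ℝ) < 2⁻¹ ^ k)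
  set y : ℕ → ℝ := extend φ (fun k => (2⁻¹ : ℝ) ^ k) 0
  have hyφ : ∀ k, y (φ k) = 2⁻¹ ^ k := fun k => hφ.injective.extend_apply _ _ k
  refine ⟨y, fun n => ?_, memℓp_extend_pow hφ.injective (by norm_num) (by norm_num) hp,
    fun c => ?_⟩
  · by_cases hn : ∃ k, φ k = n
    · obtain ⟨k, rfl⟩ := hn
      rw [hyφ]
      positivity
    · simp only [y, extend_apply' _ _ _ hn, Pi.zero_apply, le_refl]
  · obtain ⟨k, hk⟩ := exists_nat_gt c
    refine ⟨φ k, ?_⟩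
    calc c * a (φ k) ≤ (k + 1) * a (φ k) := by gcongr; exacts [ha _, by linarith]
      _ < y (φ k) := by rw [hyφ]; exact hφa k

theorem lp.icr_nonneg_eq_empty {p : ENNReal} (hp : 0 < p.toReal) :
    icr {x : lp (fun _ : ℕ => ℝ) p | ∀ n, 0 ≤ x n} = ∅ := by
  refine eq_empty_of_forall_notMem ?_
  rintro x ⟨hx, M, hM⟩
  have hx0 : Tendsto (fun n => ‖x n‖) atTop (𝓝 0) :=
    Nat.cofinite_eq_atTop ▸ (lp.memℓp x).tendsto_norm_cofinite_zero hp
  obtain ⟨y, hy, hyp, hyx⟩ :=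
    exists_memℓp_nonneg_forall_exists_mul_lt (fun n => norm_nonneg (x n)) hx0 hp
  obtain ⟨t, ht, _, ⟨u, hu, x', hx', rfl⟩, hxy⟩ :=
    neg_mem_coneHull_of_coneHull_eq hM ⟨⟨y, hyp⟩, hy, x, rfl, rfl⟩
  obtain rfl : x' = x := hx'
  obtain ⟨n, hn⟩ := hyx (1 + t)
  have hxyn := congrArg (fun z : lp (fun _ : ℕ => ℝ) p => z n) hxy
  simp only [neg_sub, lp.coeFn_sub, lp.coeFn_smul, Pi.sub_apply, Pi.smul_apply,
    smul_eq_mul] at hxyn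
  rw [Real.norm_of_nonneg (hx n)] at hn
  nlinarith [hu n]

theorem interiors_of_lp_positive_cone_empty (p : ENNReal) [Fact (1 ≤ p)] (hp : p ≠ ⊤) :
    interior {x : lp (fun _ : ℕ => ℝ) p | ∀ n : ℕ, 0 ≤ x n} = ∅ ∧
    algCore {x : lp (fun _ : ℕ => ℝ) p | ∀ n : ℕ, 0 ≤ x n} = ∅ ∧
    sqri {x : lp (fun _ : ℕ => ℝ) p | ∀ n : ℕ, 0 ≤ x n} = ∅ ∧
    icr {x : lp (fun _ : ℕ => ℝ) p | ∀ n : ℕ, 0 ≤ x n} = ∅ := by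
  have hicr := lp.icr_nonneg_eq_empty (ENNReal.toReal_pos
    (zero_lt_one.trans_le (Fact.out : 1 ≤ p)).ne' hp)
  have hcore := subset_eq_empty (algCore_subset_icr _) hicr
  exact ⟨subset_eq_empty (interior_subset_algCore _) hcore, hcore,
    subset_eq_empty (sqri_subset_icr _) hicr, hicr⟩
end

section
/- Let Φ : X × Y → ℝ ∪ {±∞} be proper with v := inf_x Φ(x,0) ∈ ℝ. If strong duality holds for the pair inf_x Φ(x,0) and sup_{y*} (−Φ*(0,y*)) (equal values with dual attainment), then (0,0) ∉ qi(co(pr_{Y×ℝ}(epi(Φ − v)) ∪ {(0,0)})). -/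
open Set Pointwise Topology

/-! A continuous linear functional `y*` attaining the dual value `v` is, via Fenchel–Young,
a lower bound `y* y ≤ r` on the projected epigraph of `Φ - v`. Hence `(y, r) ↦ r - y* y` is a
nonzero functional that is nonnegative on that set, on `(0, 0)`, on their convex hull and on the
closed cone this hull generates at `(0, 0)`; that cone is therefore not the whole space. -/

theorem EReal.coe_le_add_of_sub_le {a b c : ℝ} {F : EReal} (h : (a : EReal) - F ≤ c)
    (hF : F ≤ b) : a ≤ b + c := by
  have : ((a - b : ℝ) : EReal) ≤ c := (EReal.sub_le_sub le_rfl hF).trans h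
  linarith [EReal.coe_le_coe_iff.mp this]

section QuasiInterior

variable {E : Type*} [AddCommGroup E] [Module ℝ E]

theorem coneHull_sub_singleton_subset_halfSpace (f : E →ₗ[ℝ] ℝ) {U : Set E} {x : E}
    (h : ∀ u ∈ U, f x ≤ f u) : coneHull (U - {x}) ⊆ {z | 0 ≤ f z} := by
  rintro _ ⟨t, ht, _, ⟨u, hu, _, rfl, rfl⟩, rfl⟩
  simpa [map_smul, map_sub] using mul_nonneg ht (sub_nonneg.mpr (h u hu))

theorem not_mem_qi_of_forall_le [TopologicalSpace E] {f : E →L[ℝ] ℝ} (hf : f ≠ 0)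
    {U : Set E} {x : E} (h : ∀ u ∈ U, f x ≤ f u) : x ∉ qi U := by
  rintro ⟨-, hdense⟩
  have hcone : closure (coneHull (U - {x})) ⊆ {z | 0 ≤ f z} :=
    closure_minimal (coneHull_sub_singleton_subset_halfSpace f.toLinearMap h)
      (isClosed_le continuous_const f.continuous)
  rw [hdense] at hcone
  obtain ⟨w, hw⟩ := DFunLike.ne_iff.mp hf
  have hpos : 0 ≤ f w := hcone (mem_univ w)
  have hneg : 0 ≤ f (-w) := hcone (mem_univ (-w))
  exact hw (by rw [map_neg] at hneg; simp only [zero_apply]; linarith)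

end QuasiInterior

theorem not_qi_of_strong_duality_general
    {X Y : Type*}
    [AddCommGroup Y] [Module ℝ Y] [TopologicalSpace Y]
    (Φ : X × Y → EReal)
    (v : ℝ)
    (hstrong : ∃ ystar : Y →L[ℝ] ℝ,
      -(⨆ p : X × Y, ((ystar p.2 : ℝ) : EReal) - Φ p) = (v : EReal)) :
    ((0 : Y), (0 : ℝ)) ∉ qi (convexHull ℝ
      ({p : Y × ℝ | ∃ x : X, Φ (x, p.1) ≤ ((p.2 + v : ℝ) : EReal)} ∪ {(0, 0)})) := by
  obtain ⟨ystar, hdual⟩ := hstrong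
  have hsup : (⨆ p : X × Y, ((ystar p.2 : ℝ) : EReal) - Φ p) = ((-v : ℝ) : EReal) := by
    rw [EReal.coe_neg, ← hdual, neg_neg]
  let g : Y × ℝ →L[ℝ] ℝ := .snd ℝ Y ℝ - ystar.comp (.fst ℝ Y ℝ)
  have hg_apply : ∀ p, g p = p.2 - ystar p.1 := fun _ => rfl
  have hg : g ≠ 0 := fun h => by simpa [g] using congr($h ((0 : Y), (1 : ℝ)))
  refine not_mem_qi_of_forall_le hg fun u hu => ?_
  refine convexHull_min ?_ (convex_halfSpace_ge g.toLinearMap.isLinear _) hu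
  rintro p (⟨x, hx⟩ | rfl)
  · have hyoung : ((ystar p.1 : ℝ) : EReal) - Φ (x, p.1) ≤ ((-v : ℝ) : EReal) :=
      hsup ▸ le_iSup (fun q : X × Y => ((ystar q.2 : ℝ) : EReal) - Φ q) (x, p.1)
    have hbound := EReal.coe_le_add_of_sub_le hyoung hx
    show g 0 ≤ g p
    rw [map_zero, hg_apply]
    linarith
  · exact le_refl (g (0, 0))

theorem not_qi_of_strong_duality
    {X Y : Type*}
    [AddCommGroup X] [Module ℝ X] [TopologicalSpace X] [IsTopologicalAddGroup X]
    [ContinuousSMul ℝ X] [LocallyConvexSpace ℝ X] [T2Space X]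
    [AddCommGroup Y] [Module ℝ Y] [TopologicalSpace Y] [IsTopologicalAddGroup Y]
    [ContinuousSMul ℝ Y] [LocallyConvexSpace ℝ Y] [T2Space Y]
    (Φ : X × Y → EReal)
    (hbot : ∀ p, Φ p ≠ ⊥) (hdom : ∃ p, Φ p ≠ ⊤)
    (v : ℝ) (hv : (⨅ x : X, Φ (x, 0)) = (v : EReal))
    (hstrong : ∃ ystar : Y →L[ℝ] ℝ,
      -(⨆ p : X × Y, ((ystar p.2 : ℝ) : EReal) - Φ p) = (v : EReal)) :
    ((0 : Y), (0 : ℝ)) ∉ qi (convexHull ℝ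
      ({p : Y × ℝ | ∃ x : X, Φ (x, p.1) ≤ ((p.2 + v : ℝ) : EReal)} ∪ {(0, 0)})) :=
  not_qi_of_strong_duality_general Φ v hstrong
end

section
/- Let f, g : X → ℝ ∪ {+∞} be proper convex functions on a separated locally convex space X with dom f ∩ dom g ≠ ∅, and suppose there exists x' ∈ dom f ∩ dom g at which g is continuous. Then inf_{x∈X}{f(x)+g(x)} = max_{y*∈X*}{−f*(−y*) − g*(y*)}, i.e., Fenchel strong duality holds with dual attainment (assuming the infimum is finite). -/
open Set Pointwise Topology

/-! Weak duality is the Fenchel–Young inequality for `f` and `g` added up. For attainment, separate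
the epigraph of `f` from the interior of `{(x, r) | g x ≤ v - r}`, the hypograph of `v - g`: that
interior is nonempty because `g` is continuous at `x'`, and it misses the epigraph because
`f + g ≥ v`. Both sets lie over `x'`, so the separating hyperplane is not vertical; it is the graph
of a continuous affine function squeezed between `v - g` and `f`, whose slope `ystar` attains the
dual value. -/

theorem EReal.coe_le_of_forall_le_coe {e : EReal} {y : ℝ} (h : ∀ r : ℝ, e ≤ r → y ≤ r) :
    (y : EReal) ≤ e := by
  induction e using EReal.rec with
  | bot => linarith [h (y - 1) bot_le]
  | coe e => exact EReal.coe_le_coe_iff.2 (h e le_rfl)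
  | top => exact le_top

theorem EReal.add_coe_add_sub_coe (a b : EReal) (c : ℝ) : (a + c) + (b - c) = a + b := by
  induction a using EReal.rec <;> induction b using EReal.rec <;> try simp [← EReal.coe_sub]
  norm_cast; ring

theorem geometric_hahn_banach_interior {E : Type*} [AddCommGroup E] [Module ℝ E]
    [TopologicalSpace E] [IsTopologicalAddGroup E] [ContinuousSMul ℝ E] {s t : Set E}
    (hs : Convex ℝ s) (hs' : (interior s).Nonempty) (ht : Convex ℝ t)
    (hst : Disjoint (interior s) t) :
    ∃ (φ : StrongDual ℝ E) (u : ℝ),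
      (∀ a ∈ interior s, φ a < u) ∧ (∀ a ∈ s, φ a ≤ u) ∧ ∀ b ∈ t, u ≤ φ b := by
  obtain ⟨φ, u, hlt, hge⟩ := geometric_hahn_banach_open hs.interior isOpen_interior ht hst
  refine ⟨φ, u, hlt, fun a ha => ?_, hge⟩
  have hclosure : closure (interior s) ⊆ {a | φ a ≤ u} :=
    closure_minimal (fun a ha => (hlt a ha).le) (isClosed_Iic.preimage φ.continuous)
  rw [hs.closure_interior_eq_closure_of_nonempty_interior hs'] at hclosure
  exact hclosure (subset_closure ha)

theorem ContinuousLinearMap.apply_prod_mk_real {X : Type*} [AddCommGroup X] [Module ℝ X]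
    [TopologicalSpace X] (φ : X × ℝ →L[ℝ] ℝ) (x : X) (r : ℝ) :
    φ (x, r) = φ (x, 0) + r * φ (0, 1) := by
  rw [← smul_eq_mul, ← map_smul, ← map_add, Prod.smul_mk, smul_zero, smul_eq_mul, mul_one,
    Prod.mk_add_mk, add_zero, zero_add]

noncomputable def fenchelConjugate {X : Type*} [AddCommGroup X] [Module ℝ X] [TopologicalSpace X]
    (f : X → EReal) (xstar : X →L[ℝ] ℝ) : EReal :=
  ⨆ x, ((xstar x : ℝ) : EReal) - f x

section Conjugate

variable {X : Type*} [AddCommGroup X] [Module ℝ X] [TopologicalSpace X]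

theorem neg_fenchelConjugate_le (f : X → EReal) (xstar : X →L[ℝ] ℝ) (x : X) :
    -fenchelConjugate f xstar ≤ f x - xstar x := by
  rw [EReal.neg_le, EReal.neg_sub (.inr (EReal.coe_ne_bot _)) (.inr (EReal.coe_ne_top _)),
    add_comm]
  exact le_iSup (fun x => ((xstar x : ℝ) : EReal) - f x) x

theorem fenchelConjugate_le_of_forall_coe_sub_le {f : X → EReal} {xstar : X →L[ℝ] ℝ} {b : ℝ}
    (h : ∀ x, ((xstar x - b : ℝ) : EReal) ≤ f x) : fenchelConjugate f xstar ≤ b :=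
  iSup_le fun x => calc
    ((xstar x : ℝ) : EReal) - f x ≤ xstar x - ((xstar x - b : ℝ) : EReal) :=
      EReal.sub_le_sub le_rfl (h x)
    _ = b := by norm_cast; ring

theorem neg_fenchelConjugate_sub_fenchelConjugate_le (f g : X → EReal) (z : X →L[ℝ] ℝ) (x : X) :
    -fenchelConjugate f (-z) - fenchelConjugate g z ≤ f x + g x := calc
  _ = -fenchelConjugate f (-z) + -fenchelConjugate g z := sub_eq_add_neg _ _
  _ ≤ (f x - ((-z) x : ℝ)) + (g x - (z x : ℝ)) :=
    add_le_add (neg_fenchelConjugate_le f (-z) x) (neg_fenchelConjugate_le g z x)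
  _ = f x + g x := by
    rw [neg_apply, EReal.coe_neg, sub_eq_add_neg _ (-_), neg_neg]
    exact EReal.add_coe_add_sub_coe _ _ _

end Conjugate

theorem convex_setOf_le_coe_sub {X : Type*} [AddCommGroup X] [Module ℝ X] {g : X → EReal}
    (hg : Convex ℝ {p : X × ℝ | g p.1 ≤ (p.2 : EReal)}) (v : ℝ) :
    Convex ℝ {p : X × ℝ | g p.1 ≤ ((v - p.2 : ℝ) : EReal)} := by
  let T : X × ℝ →ᵃ[ℝ] X × ℝ :=
    (LinearMap.prodMap LinearMap.id (-LinearMap.id)).toAffineMap +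
      AffineMap.const ℝ (X × ℝ) ((0 : X), v)
  have hpre :
      {p : X × ℝ | g p.1 ≤ ((v - p.2 : ℝ) : EReal)} = T ⁻¹' {p | g p.1 ≤ (p.2 : EReal)} := by
    ext ⟨x, r⟩
    simp [T, sub_eq_add_neg, add_comm]
  exact hpre ▸ hg.affine_preimage T

theorem mk_mem_interior_setOf_le_coe_sub {X : Type*} [TopologicalSpace X] {g : X → EReal} {x : X}
    (hcont : ContinuousAt g x) {v t : ℝ} (ht : g x < ((v - t : ℝ) : EReal)) :
    (x, t) ∈ interior {p : X × ℝ | g p.1 ≤ ((v - p.2 : ℝ) : EReal)} := by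
  obtain ⟨s, hgs, hs⟩ := EReal.lt_iff_exists_real_btwn.1 ht
  have hs' : t < v - s := by linarith [EReal.coe_lt_coe_iff.1 hs]
  rw [mem_interior_iff_mem_nhds]
  filter_upwards [prod_mem_nhds (hcont.preimage_mem_nhds (Iio_mem_nhds hgs)) (Iio_mem_nhds hs')]
    with ⟨y, r⟩ ⟨(hy : g y < s), (hr : r < v - s)⟩
  exact hy.le.trans (EReal.coe_le_coe_iff.2 (by linarith))

theorem lt_coe_sub_of_mem_interior_setOf_le_coe_sub {X : Type*} [TopologicalSpace X] {g : X → EReal}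
    {v : ℝ} {p : X × ℝ}
    (hp : p ∈ interior {p : X × ℝ | g p.1 ≤ ((v - p.2 : ℝ) : EReal)}) :
    g p.1 < ((v - p.2 : ℝ) : EReal) := by
  have hshift : Filter.Tendsto (fun ε : ℝ => (p.1, p.2 + ε)) (𝓝 0) (𝓝 p) := by
    simpa using (continuous_const.prodMk (continuous_const_add p.2)).tendsto (0 : ℝ)
  obtain ⟨ε, (hε : g p.1 ≤ ((v - (p.2 + ε) : ℝ) : EReal)), (hεpos : 0 < ε)⟩ :=
    (((hshift.eventually (mem_interior_iff_mem_nhds.1 hp)).filter_mono nhdsWithin_le_nhds).and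
      (self_mem_nhdsWithin (s := Ioi 0))).exists
  exact hε.trans_lt (EReal.coe_lt_coe_iff.2 (by linarith))

theorem disjoint_interior_setOf_le_coe_sub {X : Type*} [TopologicalSpace X] {f g : X → EReal}
    {v : ℝ} (hle : ∀ x, (v : EReal) ≤ f x + g x) :
    Disjoint (interior {p : X × ℝ | g p.1 ≤ ((v - p.2 : ℝ) : EReal)})
      {p : X × ℝ | f p.1 ≤ (p.2 : EReal)} := by
  refine disjoint_left.2 fun p hpB (hpA : f p.1 ≤ p.2) => (hle p.1).not_gt ?_
  calc f p.1 + g p.1 ≤ p.2 + g p.1 := add_le_add_left hpA _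
    _ < p.2 + ((v - p.2 : ℝ) : EReal) :=
      EReal.add_lt_add_left_coe (lt_coe_sub_of_mem_interior_setOf_le_coe_sub hpB) _
    _ = v := by norm_cast; ring

theorem exists_affine_sandwich_of_separation {X : Type*} [AddCommGroup X] [Module ℝ X]
    [TopologicalSpace X] {f g : X → EReal} {u v : ℝ} (φ : X × ℝ →L[ℝ] ℝ) (hc : 0 < φ (0, 1))
    (hf : ∀ x (r : ℝ), f x ≤ r → u ≤ φ (x, r))
    (hg : ∀ x (r : ℝ), g x ≤ ((v - r : ℝ) : EReal) → φ (x, r) ≤ u) :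
    ∃ (ystar : X →L[ℝ] ℝ) (a b : ℝ), -a - b = v ∧
      (∀ x, (((-ystar) x - a : ℝ) : EReal) ≤ f x) ∧ ∀ x, ((ystar x - b : ℝ) : EReal) ≤ g x := by
  set c := φ (0, 1)
  let ψ : X →L[ℝ] ℝ := φ.comp (ContinuousLinearMap.inl ℝ X ℝ)
  have hφ : ∀ x r, φ (x, r) = ψ x + r * c := φ.apply_prod_mk_real
  -- the hyperplane `φ = u` is the graph of `x ↦ (u - ψ x) / c`
  refine ⟨c⁻¹ • ψ, -(u / c), u / c - v, by ring, fun x => ?_, fun x => ?_⟩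
  · refine EReal.coe_le_of_forall_le_coe fun r hr => ?_
    have := hφ x r ▸ hf x r hr
    simp only [neg_apply, smul_apply, smul_eq_mul]
    field_simp
    linarith
  · refine EReal.coe_le_of_forall_le_coe fun r hr => ?_
    have := hφ x (v - r) ▸ hg x (v - r) (by rwa [sub_sub_cancel])
    simp only [smul_apply, smul_eq_mul]
    field_simp
    linarith

theorem exists_affine_sandwich {X : Type*} [AddCommGroup X] [Module ℝ X] [TopologicalSpace X]
    [IsTopologicalAddGroup X] [ContinuousSMul ℝ X] {f g : X → EReal}
    (hfconv : Convex ℝ {p : X × ℝ | f p.1 ≤ (p.2 : EReal)})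
    (hgconv : Convex ℝ {p : X × ℝ | g p.1 ≤ (p.2 : EReal)})
    {x' : X} (hx'f : f x' ≠ ⊤) (hx'g : g x' ≠ ⊤) (hcont : ContinuousAt g x')
    {v : ℝ} (hle : ∀ x, (v : EReal) ≤ f x + g x) :
    ∃ (ystar : X →L[ℝ] ℝ) (a b : ℝ), -a - b = v ∧
      (∀ x, (((-ystar) x - a : ℝ) : EReal) ≤ f x) ∧ ∀ x, ((ystar x - b : ℝ) : EReal) ≤ g x := by
  obtain ⟨r₀, hfr₀, -⟩ := EReal.lt_iff_exists_real_btwn.1 (lt_top_iff_ne_top.2 hx'f)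
  obtain ⟨s₀, hgs₀, -⟩ := EReal.lt_iff_exists_real_btwn.1 (lt_top_iff_ne_top.2 hx'g)
  set t₀ := min (v - s₀) r₀ - 1
  have ht₀r₀ : t₀ < r₀ := by linarith [min_le_right (v - s₀) r₀]
  have ht₀ : (x', t₀) ∈ interior {p : X × ℝ | g p.1 ≤ ((v - p.2 : ℝ) : EReal)} :=
    mk_mem_interior_setOf_le_coe_sub hcont
      (hgs₀.trans (EReal.coe_lt_coe_iff.2 (by linarith [min_le_left (v - s₀) r₀])))
  obtain ⟨φ, u, hint, hB, hA⟩ := geometric_hahn_banach_interior (convex_setOf_le_coe_sub hgconv v)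
    ⟨_, ht₀⟩ hfconv (disjoint_interior_setOf_le_coe_sub hle)
  have hc : 0 < φ (0, 1) := by
    have h₁ := hint _ ht₀
    have h₂ := hA (x', r₀) hfr₀.le
    rw [φ.apply_prod_mk_real] at h₁ h₂
    nlinarith
  exact exists_affine_sandwich_of_separation φ hc (fun x r hr => hA (x, r) hr)
    (fun x r hr => hB (x, r) hr)

theorem fenchel_duality_of_continuity_general
    {X : Type*} [AddCommGroup X] [Module ℝ X] [TopologicalSpace X]
    [IsTopologicalAddGroup X] [ContinuousSMul ℝ X]
    (f g : X → EReal)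
    (hfconv : Convex ℝ {p : X × ℝ | f p.1 ≤ (p.2 : EReal)})
    (hgconv : Convex ℝ {p : X × ℝ | g p.1 ≤ (p.2 : EReal)})
    (x' : X) (hx'f : f x' ≠ ⊤) (hx'g : g x' ≠ ⊤) (hcont : ContinuousAt g x')
    (v : ℝ) (hv : (⨅ x : X, f x + g x) = (v : EReal)) :
    ∃ ystar : X →L[ℝ] ℝ,
      (-(⨆ x : X, (((-ystar) x : ℝ) : EReal) - f x)
        - (⨆ x : X, ((ystar x : ℝ) : EReal) - g x) = (v : EReal)) ∧
      ∀ zstar : X →L[ℝ] ℝ,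
        -(⨆ x : X, (((-zstar) x : ℝ) : EReal) - f x)
          - (⨆ x : X, ((zstar x : ℝ) : EReal) - g x) ≤ (v : EReal) := by
  have hweak (z : X →L[ℝ] ℝ) : -fenchelConjugate f (-z) - fenchelConjugate g z ≤ v :=
    hv ▸ le_iInf (neg_fenchelConjugate_sub_fenchelConjugate_le f g z)
  obtain ⟨ystar, a, b, hab, hfa, hgb⟩ :=
    exists_affine_sandwich hfconv hgconv hx'f hx'g hcont fun x => hv ▸ iInf_le _ x
  refine ⟨ystar, le_antisymm (hweak ystar) ?_, hweak⟩
  calc (v : EReal) = -(a : EReal) - b := by rw [← hab]; norm_cast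
    _ ≤ -fenchelConjugate f (-ystar) - fenchelConjugate g ystar :=
      EReal.sub_le_sub (EReal.neg_le_neg_iff.2 (fenchelConjugate_le_of_forall_coe_sub_le hfa))
        (fenchelConjugate_le_of_forall_coe_sub_le hgb)

theorem fenchel_duality_of_continuity
    {X : Type*} [AddCommGroup X] [Module ℝ X] [TopologicalSpace X]
    [IsTopologicalAddGroup X] [ContinuousSMul ℝ X] [LocallyConvexSpace ℝ X] [T2Space X]
    (f g : X → EReal)
    (hfbot : ∀ x, f x ≠ ⊥) (hgbot : ∀ x, g x ≠ ⊥)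
    (hfconv : Convex ℝ {p : X × ℝ | f p.1 ≤ (p.2 : EReal)})
    (hgconv : Convex ℝ {p : X × ℝ | g p.1 ≤ (p.2 : EReal)})
    (x' : X) (hx'f : f x' ≠ ⊤) (hx'g : g x' ≠ ⊤) (hcont : ContinuousAt g x')
    (v : ℝ) (hv : (⨅ x : X, f x + g x) = (v : EReal)) :
    ∃ ystar : X →L[ℝ] ℝ,
      (-(⨆ x : X, (((-ystar) x : ℝ) : EReal) - f x)
        - (⨆ x : X, ((ystar x : ℝ) : EReal) - g x) = (v : EReal)) ∧
      ∀ zstar : X →L[ℝ] ℝ,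
        -(⨆ x : X, (((-zstar) x : ℝ) : EReal) - f x)
          - (⨆ x : X, ((zstar x : ℝ) : EReal) - g x) ≤ (v : EReal) :=
  fenchel_duality_of_continuity_general f g hfconv hgconv x' hx'f hx'g hcont v hv
end
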